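/- The formal power series Π(x) = Σ_{N≥0} c_N x^N ∈ ℚ[[x]] satisfies the Picard–Fuchs differential equation {θ³ + 36x²(θ+1)(2θ+1)(2θ+3) − 2x(2θ+1)(10θ² + 10θ + 3)} Π(x) = 0, where θ = x·d/dx. Equivalently, c₀ = 1, c₁ = 6·c₀, and for all N ≥ 2 the coefficients satisfy the recursion N³·c_N = 2(2N−1)(10N² − 10N + 3)·c_{N−1} − 36(N−1)(2N−1)(2N−3)·c_{N−2}. -/

import Mathlib

/-!
Grouping the terms of `c_N` by `k` and summing over `l + m = N - k` with Vandermonde's identity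
`∑ C(j, l)² = C(2j, j)` gives `c_N = C(2N, N) ∑_j C(N, j)² C(2j, j)`. The summand `t(N, j)`
obeys two first-order shift relations, in `N` and in `j`, valid for all `N, j` because both
sides vanish outside the support. The recurrence operator applied to `t(·, j)` is a polynomial
combination of these relations equal to `g(N, j+1) - g(N, j)` with
`g(N, j) = j³(3j - 4N) t(N, j)`, so summing over `j` telescopes to `0`.
-/

open scoped Nat

/-- The coefficients `c_N = Σ_{k+l+m=N} (2N)!/((k!)²(l!)²(m!)²)` of the period
integral `Π(x) = Σ c_N x^N` of the mirror family of degree-12 K3 surfaces. -/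
def periodCoeff (N : ℕ) : ℚ :=
  ∑ p ∈ Finset.Nat.antidiagonalTuple 3 N,
    ((2 * N)! : ℚ) / (((p 0)! ^ 2 * (p 1)! ^ 2 * (p 2)! ^ 2 : ℕ) : ℚ)

open Finset Nat

theorem Finset.Nat.sum_antidiagonalTuple_succ {M : Type*} [AddCommMonoid M] (k n : ℕ)
    (f : (Fin (k + 1) → ℕ) → M) :
    ∑ x ∈ Nat.antidiagonalTuple (k + 1) n, f x =
      ∑ p ∈ antidiagonal n, ∑ x ∈ Nat.antidiagonalTuple k p.2, f (Fin.cons p.1 x) := by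
  rw [← sum_sigma (antidiagonal n) (fun p => Nat.antidiagonalTuple k p.2)
    (fun q => f (Fin.cons q.1.1 q.2))]
  refine sum_nbij' (fun x => ⟨(x 0, ∑ i, Fin.tail x i), Fin.tail x⟩)
    (fun q => Fin.cons q.1.1 q.2) ?_ ?_ ?_ ?_ ?_
  · intro x hx
    rw [Nat.mem_antidiagonalTuple, Fin.sum_univ_succ] at hx
    simp [Nat.mem_antidiagonalTuple, ← hx, Fin.tail]
  · rintro ⟨⟨a, b⟩, x⟩ hq
    simp_all [Nat.mem_antidiagonalTuple, Fin.sum_univ_succ]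
  · simp
  · rintro ⟨⟨a, b⟩, x⟩ hq
    simp_all [Nat.mem_antidiagonalTuple]
  · simp

theorem Finset.Nat.sum_antidiagonalTuple_three {M : Type*} [AddCommMonoid M] (n : ℕ)
    (f : (Fin 3 → ℕ) → M) :
    ∑ x ∈ Nat.antidiagonalTuple 3 n, f x =
      ∑ p ∈ antidiagonal n, ∑ q ∈ antidiagonal p.2, f ![p.1, q.1, q.2] := by
  simp only [Nat.sum_antidiagonalTuple_succ, Nat.antidiagonalTuple_two, sum_map]
  rfl

theorem Nat.sum_antidiagonal_choose_sq (r : ℕ) :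
    ∑ q ∈ antidiagonal r, r.choose q.1 ^ 2 = r.centralBinom := by
  rw [Nat.sum_antidiagonal_eq_sum_range_succ_mk, sum_range_choose_sq,
    centralBinom_eq_two_mul_choose]

theorem Nat.factorial_two_mul_eq_centralBinom_mul (k l m : ℕ) :
    (2 * (k + (l + m)))! = (k + (l + m)).centralBinom * (k + (l + m)).choose (l + m) ^ 2 *
      (l + m).choose l ^ 2 * (k ! * l ! * m !) ^ 2 := by
  have hk := add_choose_mul_factorial_mul_factorial k (l + m)
  have hl := add_choose_mul_factorial_mul_factorial m l
  rw [add_comm m l] at hl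
  calc (2 * (k + (l + m)))! = (k + (l + m)).centralBinom * (k + (l + m))! ^ 2 := by
        rw [centralBinom_eq_two_mul_choose, two_mul, sq, ← mul_assoc,
          add_choose_mul_factorial_mul_factorial]
    _ = _ := by rw [← hk, ← hl]; ring

def periodTerm (n j : ℕ) : ℕ := n.centralBinom * n.choose j ^ 2 * j.centralBinom

theorem periodTerm_of_lt {n j : ℕ} (h : n < j) : periodTerm n j = 0 := by
  simp [periodTerm, choose_eq_zero_of_lt h]

theorem periodCoeff_eq_sum_periodTerm (n : ℕ) :
    periodCoeff n = ∑ j ∈ range (n + 1), (periodTerm n j : ℚ) := by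
  rw [periodCoeff, Nat.sum_antidiagonalTuple_three]
  calc _ = ∑ p ∈ antidiagonal n, ∑ q ∈ antidiagonal p.2,
        ((n.centralBinom * n.choose p.2 ^ 2 * p.2.choose q.1 ^ 2 : ℕ) : ℚ) := by
        refine sum_congr rfl fun ⟨k, r⟩ hp => sum_congr rfl fun ⟨l, m⟩ hq => ?_
        rw [HasAntidiagonal.mem_antidiagonal] at hp hq
        subst hp hq
        simp only [Matrix.cons_val_zero, Matrix.cons_val_one, Matrix.cons_val_two,
          Matrix.head_cons, Matrix.tail_cons]
        rw [div_eq_iff (by positivity), factorial_two_mul_eq_centralBinom_mul]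
        push_cast
        ring
    _ = ∑ p ∈ antidiagonal n, (periodTerm n p.2 : ℚ) := by
        simp only [← Nat.cast_sum, ← mul_sum, sum_antidiagonal_choose_sq, periodTerm]
    _ = _ := by rw [← sum_antidiagonal_swap, sum_antidiagonal_eq_sum_range_succ_mk]; rfl

theorem periodTerm_succ_left (n j : ℕ) :
    (n + 1 - j) ^ 2 * periodTerm (n + 1) j = 2 * (2 * n + 1) * (n + 1) * periodTerm n j := by
  refine Nat.eq_of_mul_eq_mul_left n.succ_pos ?_
  calc (n + 1) * ((n + 1 - j) ^ 2 * periodTerm (n + 1) j)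
      = ((n + 1) * (n + 1).centralBinom) * ((n + 1).choose j * (n + 1 - j)) ^ 2 *
          j.centralBinom := by rw [periodTerm]; ring
    _ = (2 * (2 * n + 1) * n.centralBinom) * (n.choose j * (n + 1)) ^ 2 * j.centralBinom := by
        rw [succ_mul_centralBinom_succ, choose_mul_succ_eq]
    _ = (n + 1) * (2 * (2 * n + 1) * (n + 1) * periodTerm n j) := by rw [periodTerm]; ring

theorem periodTerm_succ_right (n j : ℕ) :
    (j + 1) ^ 3 * periodTerm n (j + 1) = 2 * (2 * j + 1) * (n - j) ^ 2 * periodTerm n j :=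
  calc (j + 1) ^ 3 * periodTerm n (j + 1)
      = n.centralBinom * (n.choose (j + 1) * (j + 1)) ^ 2 *
          ((j + 1) * (j + 1).centralBinom) := by rw [periodTerm]; ring
    _ = n.centralBinom * (n.choose j * (n - j)) ^ 2 * (2 * (2 * j + 1) * j.centralBinom) := by
        rw [succ_mul_centralBinom_succ, choose_succ_right_eq]
    _ = 2 * (2 * j + 1) * (n - j) ^ 2 * periodTerm n j := by rw [periodTerm]; ring

theorem cast_periodTerm_succ_left (n j : ℕ) :
    ((n : ℚ) + 1 - j) ^ 2 * periodTerm (n + 1) j =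
      2 * (2 * n + 1) * (n + 1) * periodTerm n j := by
  rcases le_or_gt j (n + 1) with h | h
  · exact_mod_cast congrArg (Nat.cast : ℕ → ℚ) (periodTerm_succ_left n j)
  · simp [periodTerm_of_lt h, periodTerm_of_lt (n.lt_succ_self.trans h)]

theorem cast_periodTerm_succ_right (n j : ℕ) :
    ((j : ℚ) + 1) ^ 3 * periodTerm n (j + 1) =
      2 * (2 * j + 1) * ((n : ℚ) - j) ^ 2 * periodTerm n j := by
  rcases le_or_gt j n with h | h
  · exact_mod_cast congrArg (Nat.cast : ℕ → ℚ) (periodTerm_succ_right n j)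
  · simp [periodTerm_of_lt h, periodTerm_of_lt (h.trans j.lt_succ_self)]

theorem periodCoeff_eq_sum_range {n m : ℕ} (h : n < m) :
    periodCoeff n = ∑ j ∈ range m, (periodTerm n j : ℚ) := by
  rw [periodCoeff_eq_sum_periodTerm]
  refine sum_subset (range_subset_range.2 h) fun j _ hj => ?_
  rw [periodTerm_of_lt (by simpa using hj), Nat.cast_zero]

/-- Zeilberger's certificate for the recurrence of `periodTerm` in its first argument. -/
def periodCert (N j : ℕ) : ℚ := (j : ℚ) ^ 3 * (3 * j - 4 * N) * periodTerm N j

theorem periodTerm_telescoping {n N : ℕ} (hN : N = n + 2) (j : ℕ) :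
    (N : ℚ) ^ 4 * periodTerm N j
        - N * (2 * (2 * N - 1) * (10 * N ^ 2 - 10 * N + 3)) * periodTerm (n + 1) j
        + N * (36 * (N - 1) * (2 * N - 1) * (2 * N - 3)) * periodTerm n j
      = periodCert N (j + 1) - periodCert N j := by
  have R1 := cast_periodTerm_succ_left n j
  have R2 := cast_periodTerm_succ_left (n + 1) j
  have R3 := cast_periodTerm_succ_right N j
  subst hN
  simp only [periodCert]
  push_cast at R1 R2 R3 ⊢
  -- eliminate `periodTerm N (j + 1)`, `periodTerm N j`, `periodTerm (n + 1) j` in turn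
  linear_combination (4 * (n + 2 : ℚ) - 3 * j - 3) * R3
    + ((n + 2 : ℚ) ^ 2 + 18 * (n + 2) * j - 9 * j ^ 2 + 8 * (n + 2) - 18 * j - 6) * R2
    - 18 * (n + 2 : ℚ) * (2 * (n + 2) - 1) * R1

theorem periodCoeff_recurrence {N : ℕ} (hN : 2 ≤ N) :
    (N : ℚ) ^ 3 * periodCoeff N =
      2 * (2 * (N : ℚ) - 1) * (10 * (N : ℚ) ^ 2 - 10 * (N : ℚ) + 3) * periodCoeff (N - 1) -
        36 * ((N : ℚ) - 1) * (2 * (N : ℚ) - 1) * (2 * (N : ℚ) - 3) * periodCoeff (N - 2) := by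
  obtain ⟨n, rfl⟩ : ∃ n, N = n + 2 := ⟨N - 2, by omega⟩
  have htel :=
    sum_congr rfl fun j (_ : j ∈ range (n + 3)) => periodTerm_telescoping (n := n) rfl j
  rw [sum_range_sub, sum_add_distrib, sum_sub_distrib, ← mul_sum, ← mul_sum, ← mul_sum,
    ← periodCoeff_eq_sum_range (by omega), ← periodCoeff_eq_sum_range (by omega),
    ← periodCoeff_eq_sum_range (by omega)] at htel
  have hboundary : periodCert (n + 2) (n + 3) = 0 ∧ periodCert (n + 2) 0 = 0 := by
    simp [periodCert, periodTerm_of_lt (show n + 2 < n + 3 by omega)]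
  rw [hboundary.1, hboundary.2, sub_zero] at htel
  rw [show n + 2 - 1 = n + 1 by omega, Nat.add_sub_cancel]
  refine mul_left_cancel₀ (show ((n + 2 : ℕ) : ℚ) ≠ 0 by positivity) ?_
  linear_combination htel

/-- `Π(x) = Σ c_N x^N` satisfies the Picard–Fuchs equation
`{θ³ + 36x²(θ+1)(2θ+1)(2θ+3) − 2x(2θ+1)(10θ²+10θ+3)}Π = 0` (`θ = x d/dx`);
equivalently `c₀ = 1`, `c₁ = 6c₀`, and for `N ≥ 2`
`N³·c_N = 2(2N−1)(10N²−10N+3)·c_{N−1} − 36(N−1)(2N−1)(2N−3)·c_{N−2}`. -/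
theorem stmt_13 :
    periodCoeff 0 = 1 ∧ periodCoeff 1 = 6 * periodCoeff 0 ∧
    ∀ N : ℕ, 2 ≤ N →
      (N : ℚ) ^ 3 * periodCoeff N =
        2 * (2 * (N : ℚ) - 1) * (10 * (N : ℚ) ^ 2 - 10 * (N : ℚ) + 3) *
            periodCoeff (N - 1)
          - 36 * ((N : ℚ) - 1) * (2 * (N : ℚ) - 1) * (2 * (N : ℚ) - 3) *
            periodCoeff (N - 2) := by
  have h0 : periodCoeff 0 = 1 := by simp [periodCoeff_eq_sum_periodTerm, periodTerm]
  have h1 : periodCoeff 1 = 6 := by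
    norm_num [periodCoeff_eq_sum_periodTerm, sum_range_succ, periodTerm,
      centralBinom_eq_two_mul_choose]
  exact ⟨h0, by rw [h0, h1]; norm_num, fun N hN => periodCoeff_recurrence hN⟩
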